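/- Let A = Σ_{n≥0} αₙXⁿ be a rational power series over a field K, written as a reduced fraction f/g with f, g coprime polynomials and g(0) ≠ 0. Then the K-vector space spanned by A, τ(A), τ²(A), … (where τ is the shift operator) has finite dimension equal to max(1 + deg f, deg g). Conversely, a power series A is rational if and only if the span of {τⁿ(A) : n ≥ 0} is finite-dimensional. -/

import Mathlib

/-!
The span of the shifts of `A` is the cyclic subspace of `τ` generated by `A`: it is
finite-dimensional exactly when some nonzero polynomial `c` satisfies `c(τ) A = 0`, and its
dimension is then the least degree of such a `c`. The bridge to rational functions is the identity
`c(τ) A = τᵐ (A · Xᵐ c(1/X))` for `deg c ≤ m`, so `c(τ)` kills `A` iff `A` times the reflected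
polynomial is a polynomial of degree `< m`. Hence `A g = f` gives the annihilator `Xᵈ g(1/X)` with
`d = max (1 + deg f) (deg g)`. Conversely an annihilator `c` yields `f · rev c = r · g` with
`deg r < deg c`; coprimality gives `g ∣ rev c` and `f ∣ r`, so `deg c ≥ d`.
-/

open PowerSeries

/-- The shift operator `τ(Σ αₙXⁿ) = Σ α_{n+1}Xⁿ`. -/
noncomputable def shift {K : Type*} [Field K] (A : PowerSeries K) : PowerSeries K :=
  PowerSeries.mk fun n => coeff (n + 1) A

section OrbitSpan

open Polynomial hiding X

variable {K M : Type*} [Field K] [AddCommGroup M] [Module K M] (T : Module.End K M) (v : M)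

theorem aeval_apply_eq_sum_fin {n : ℕ} {p : K[X]} (hp : p.degree < n) :
    aeval T p v = ∑ i : Fin n, p.coeff i • (T ^ (i : ℕ)) v := by
  rw [aeval_endomorphism, sum_fin (fun k b => b • (T ^ k) v) (fun _ => zero_smul K _) hp]

theorem span_range_pow_apply_eq {c : K[X]} (hc : c ≠ 0) (hcv : aeval T c v = 0) :
    Submodule.span K (Set.range fun n => (T ^ n) v) =
      Submodule.span K (Set.range fun i : Fin c.natDegree => (T ^ (i : ℕ)) v) := by
  refine le_antisymm (Submodule.span_le.2 ?_) (Submodule.span_mono ?_)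
  · rintro _ ⟨n, rfl⟩
    have hmod : (T ^ n) v = aeval T (Polynomial.X ^ n % c) v := by
      conv_lhs => rw [← aeval_X_pow (R := K) T, ← EuclideanDomain.mod_add_div (Polynomial.X ^ n) c,
        mul_comm, map_add, map_mul]
      simp [hcv]
    change (T ^ n) v ∈ _
    rw [hmod, aeval_apply_eq_sum_fin T v
      ((degree_mod_lt _ hc).trans_eq (degree_eq_natDegree hc))]
    exact Submodule.sum_mem _ fun i _ => Submodule.smul_mem _ _ (Submodule.subset_span ⟨i, rfl⟩)
  · rintro _ ⟨i, rfl⟩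
    exact ⟨i, rfl⟩

theorem finiteDimensional_span_range_pow_apply {c : K[X]} (hc : c ≠ 0) (hcv : aeval T c v = 0) :
    FiniteDimensional K (Submodule.span K (Set.range fun n => (T ^ n) v)) := by
  rw [span_range_pow_apply_eq T v hc hcv]
  exact FiniteDimensional.span_of_finite K (Set.finite_range _)

theorem finrank_span_range_pow_apply_le {c : K[X]} (hc : c ≠ 0) (hcv : aeval T c v = 0) :
    Module.finrank K (Submodule.span K (Set.range fun n => (T ^ n) v)) ≤ c.natDegree := by
  rw [span_range_pow_apply_eq T v hc hcv]
  exact (finrank_range_le_card _).trans_eq (Fintype.card_fin _)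

theorem exists_aeval_apply_eq_zero
    [FiniteDimensional K (Submodule.span K (Set.range fun n => (T ^ n) v))] :
    ∃ c : K[X], c ≠ 0 ∧ aeval T c v = 0 := by
  by_contra! h
  exact Module.Finite.not_linearIndependent_of_infinite _ (linearIndependent_span
    ((linearIndependent_powers_iff_aeval T v).2 fun p hp => not_imp_not.1 (h p) hp))

theorem le_finrank_span_range_pow_apply {n : ℕ}
    [FiniteDimensional K (Submodule.span K (Set.range fun n => (T ^ n) v))]
    (h : ∀ c : K[X], c ≠ 0 → aeval T c v = 0 → n ≤ c.natDegree) :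
    n ≤ Module.finrank K (Submodule.span K (Set.range fun n => (T ^ n) v)) := by
  have hli : LinearIndependent K fun i : Fin n => (T ^ (i : ℕ)) v := by
    rw [Fintype.linearIndependent_iff]
    intro a ha
    set c := (degreeLTEquiv K n).symm a
    have hcoeff : ∀ i : Fin n, (c : K[X]).coeff i = a i := fun i =>
      congrFun ((degreeLTEquiv K n).apply_symm_apply a) i
    have hcv : aeval T (c : K[X]) v = 0 := by
      simp only [aeval_apply_eq_sum_fin T v (mem_degreeLT.1 c.2), hcoeff, ha]
    have hc : (c : K[X]) = 0 := by
      by_contra hc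
      exact (h c hc hcv).not_gt ((natDegree_lt_iff_degree_lt hc).2 (mem_degreeLT.1 c.2))
    intro i
    rw [← hcoeff i, hc, coeff_zero]
  calc n = Module.finrank K (Submodule.span K (Set.range fun i : Fin n => (T ^ (i : ℕ)) v)) := by
        rw [finrank_span_eq_card hli, Fintype.card_fin]
    _ ≤ _ := Submodule.finrank_mono (Submodule.span_mono (by rintro _ ⟨i, rfl⟩; exact ⟨i, rfl⟩))

end OrbitSpan

section Shift

open scoped Polynomial
open Polynomial (aeval reflect)

variable {K : Type*} [Field K]

noncomputable def shiftₗ : Module.End K K⟦X⟧ where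
  toFun := shift
  map_add' _ _ := by ext; simp [shift]
  map_smul' _ _ := by ext; simp [shift]

theorem shiftₗ_apply (A : K⟦X⟧) : shiftₗ A = shift A := rfl

theorem shift_iterate_eq_shiftₗ_pow (A : K⟦X⟧) :
    (fun n => shift^[n] A) = fun n => (shiftₗ ^ n) A :=
  funext fun n => (Module.End.pow_apply shiftₗ n A).symm

theorem coeff_shiftₗ_pow_apply (A : K⟦X⟧) (n m : ℕ) :
    coeff m ((shiftₗ ^ n) A) = coeff (m + n) A := by
  induction n generalizing m with
  | zero => simp
  | succ n ih =>
    rw [pow_succ', Module.End.mul_apply, shiftₗ_apply, shift, coeff_mk, ih, add_right_comm,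
      add_assoc]

theorem shiftₗ_pow_apply_mul_X_pow (A : K⟦X⟧) (n : ℕ) : (shiftₗ ^ n) (A * X ^ n) = A := by
  ext m
  rw [coeff_shiftₗ_pow_apply, PowerSeries.coeff_mul_X_pow]

theorem shiftₗ_pow_apply_eq_zero_iff {B : K⟦X⟧} {m : ℕ} :
    (shiftₗ ^ m) B = 0 ↔ ∃ r : K[X], r.degree < m ∧ B = r := by
  constructor
  · intro h
    refine ⟨trunc m B, degree_trunc_lt B m, ?_⟩
    ext k
    rw [Polynomial.coeff_coe, coeff_trunc]
    split_ifs with hk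
    · rfl
    · obtain ⟨j, rfl⟩ := Nat.exists_eq_add_of_le (not_lt.1 hk)
      rw [add_comm, ← coeff_shiftₗ_pow_apply, h, map_zero]
  · rintro ⟨r, hr, rfl⟩
    ext k
    rw [coeff_shiftₗ_pow_apply, Polynomial.coeff_coe, map_zero,
      Polynomial.coeff_eq_zero_of_degree_lt (hr.trans_le (by exact_mod_cast Nat.le_add_left m k))]

theorem aeval_shiftₗ_apply (A : K⟦X⟧) {c : K[X]} {m : ℕ} (hc : c.natDegree ≤ m) :
    aeval shiftₗ c A = (shiftₗ ^ m) (A * (reflect m c : K⟦X⟧)) := by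
  refine Polynomial.induction_with_natDegree_le
    (fun c => aeval shiftₗ c A = (shiftₗ ^ m) (A * (reflect m c : K⟦X⟧))) m
    ?zero ?C_mul_pow ?add c hc
  case zero => simp
  case C_mul_pow =>
    intro n r _ hn
    obtain ⟨k, rfl⟩ := Nat.exists_eq_add_of_le hn
    rw [Polynomial.reflect_C_mul_X_pow, Polynomial.revAt_le hn, Nat.add_sub_cancel_left,
      Polynomial.coe_mul, Polynomial.coe_C, Polynomial.coe_pow, Polynomial.coe_X,
      mul_left_comm, ← smul_eq_C_mul, map_smul, pow_add, Module.End.mul_apply,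
      shiftₗ_pow_apply_mul_X_pow]
    simp
  case add =>
    intro f g _ _ hf hg
    rw [map_add, LinearMap.add_apply, hf, hg, Polynomial.reflect_add, Polynomial.coe_add, mul_add,
      map_add]

theorem exists_aeval_shiftₗ_eq_zero_of_mul_eq {A : K⟦X⟧} {f g : K[X]} (hg : g ≠ 0)
    (hA : A * g = f) :
    ∃ c : K[X], c ≠ 0 ∧ c.natDegree ≤ max (f.natDegree + 1) g.natDegree ∧ aeval shiftₗ c A = 0 := by
  set d := max (f.natDegree + 1) g.natDegree
  have hcd : (reflect d g).natDegree ≤ d :=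
    Polynomial.natDegree_reflect_le.trans (max_le le_rfl (le_max_right _ _))
  have hfd : f.degree < d := Polynomial.degree_le_natDegree.trans_lt
    (by exact_mod_cast (le_max_left _ _ : f.natDegree + 1 ≤ d))
  refine ⟨reflect d g, by simpa using hg, hcd, ?_⟩
  rw [aeval_shiftₗ_apply A hcd, Polynomial.reflect_reflect, hA, shiftₗ_pow_apply_eq_zero_iff]
  exact ⟨f, hfd, rfl⟩

theorem exists_mul_reverse_eq_of_aeval_shiftₗ_eq_zero {A : K⟦X⟧} {c : K[X]}
    (h : aeval shiftₗ c A = 0) : ∃ r : K[X], r.degree < c.natDegree ∧ A * c.reverse = r := by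
  rwa [aeval_shiftₗ_apply A le_rfl, shiftₗ_pow_apply_eq_zero_iff] at h

theorem le_natDegree_of_aeval_shiftₗ_eq_zero {A : K⟦X⟧} {f g c : K[X]} (hco : IsCoprime f g)
    (hA : A * g = f) (hf : f ≠ 0) (hc : c ≠ 0) (h : aeval shiftₗ c A = 0) :
    max (f.natDegree + 1) g.natDegree ≤ c.natDegree := by
  obtain ⟨r, hr, hAr⟩ := exists_mul_reverse_eq_of_aeval_shiftₗ_eq_zero h
  have hrev : c.reverse ≠ 0 := mt Polynomial.reverse_eq_zero.1 hc
  have key : f * c.reverse = r * g := by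
    rw [← Polynomial.coe_inj, Polynomial.coe_mul, Polynomial.coe_mul, ← hA, ← hAr, mul_right_comm]
  have hr0 : r ≠ 0 := by
    rintro rfl
    exact mul_ne_zero hf hrev (key.trans (zero_mul g))
  have hg : g.natDegree ≤ c.natDegree :=
    (Polynomial.natDegree_le_of_dvd (hco.symm.dvd_of_dvd_mul_left (key ▸ dvd_mul_left g r))
      hrev).trans c.reverse_natDegree_le
  have hfr : f.natDegree ≤ r.natDegree :=
    Polynomial.natDegree_le_of_dvd (hco.dvd_of_dvd_mul_right (key ▸ dvd_mul_right f _)) hr0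
  have hrc : r.natDegree < c.natDegree := (Polynomial.natDegree_lt_iff_degree_lt hr0).2 hr
  omega

theorem finiteDimensional_span_shiftₗ_of_mul_eq {A : K⟦X⟧} {f g : K[X]} (hg : g ≠ 0)
    (hA : A * g = f) : FiniteDimensional K (Submodule.span K (Set.range fun n => (shiftₗ ^ n) A)) :=
  have ⟨_, hc0, _, hc⟩ := exists_aeval_shiftₗ_eq_zero_of_mul_eq hg hA
  finiteDimensional_span_range_pow_apply _ _ hc0 hc

theorem finrank_span_shiftₗ_of_isCoprime {A : K⟦X⟧} {f g : K[X]} (hco : IsCoprime f g)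
    (hA : A * g = f) (hf : f ≠ 0) :
    Module.finrank K (Submodule.span K (Set.range fun n => (shiftₗ ^ n) A)) =
      max (f.natDegree + 1) g.natDegree := by
  have hg : g ≠ 0 := by
    rintro rfl
    exact hf (by simpa using hA.symm)
  obtain ⟨c, hc0, hcd, hc⟩ := exists_aeval_shiftₗ_eq_zero_of_mul_eq hg hA
  have := finiteDimensional_span_range_pow_apply _ _ hc0 hc
  exact le_antisymm ((finrank_span_range_pow_apply_le _ _ hc0 hc).trans hcd)
    (le_finrank_span_range_pow_apply _ _ fun c hc0 hc =>
      le_natDegree_of_aeval_shiftₗ_eq_zero hco hA hf hc0 hc)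

end Shift

theorem rational_iff_shifts_span_finiteDimensional {K : Type*} [Field K] (A : PowerSeries K) :
    (∀ f g : Polynomial K, IsCoprime f g → g.coeff 0 ≠ 0 →
      A * (g : PowerSeries K) = (f : PowerSeries K) →
      FiniteDimensional K ↥(Submodule.span K (Set.range fun n => shift^[n] A)) ∧
      (Module.finrank K ↥(Submodule.span K (Set.range fun n => shift^[n] A)) : WithBot ℕ) =
        max (1 + f.degree) g.degree) ∧
    ((∃ f g : Polynomial K, g.coeff 0 ≠ 0 ∧ A * (g : PowerSeries K) = (f : PowerSeries K)) ↔
      FiniteDimensional K ↥(Submodule.span K (Set.range fun n => shift^[n] A))) := by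
  have ne_zero {g : Polynomial K} (hg0 : g.coeff 0 ≠ 0) : g ≠ 0 := by
    rintro rfl
    exact hg0 (Polynomial.coeff_zero 0)
  rw [shift_iterate_eq_shiftₗ_pow]
  refine ⟨fun f g hco hg0 hA => ⟨finiteDimensional_span_shiftₗ_of_mul_eq (ne_zero hg0) hA, ?_⟩,
    ⟨fun ⟨f, g, hg0, hA⟩ => finiteDimensional_span_shiftₗ_of_mul_eq (ne_zero hg0) hA,
      fun _ => ?_⟩⟩
  · rcases eq_or_ne f 0 with rfl | hf
    -- `f = 0` forces `A = 0` and `g` a unit; the formula then reads `max ⊥ 0 = 0`.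
    · obtain rfl : A = 0 := by
        rw [Polynomial.coe_zero, mul_eq_zero, Polynomial.coe_eq_zero_iff] at hA
        exact hA.resolve_right (ne_zero hg0)
      have hbot : Submodule.span K (Set.range fun n => (shiftₗ ^ n) (0 : PowerSeries K)) = ⊥ :=
        Submodule.span_eq_bot.2 (by rintro _ ⟨n, rfl⟩; exact map_zero _)
      rw [hbot, finrank_bot, Polynomial.degree_eq_zero_of_isUnit (isCoprime_zero_left.1 hco)]
      rfl
    · rw [finrank_span_shiftₗ_of_isCoprime hco hA hf, Polynomial.degree_eq_natDegree hf,
        Polynomial.degree_eq_natDegree (ne_zero hg0), add_comm]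
      rfl
  · obtain ⟨c, hc0, hc⟩ := exists_aeval_apply_eq_zero shiftₗ A
    obtain ⟨r, -, hr⟩ := exists_mul_reverse_eq_of_aeval_shiftₗ_eq_zero hc
    refine ⟨r, c.reverse, ?_, hr⟩
    rwa [Polynomial.coeff_zero_reverse, Polynomial.leadingCoeff_ne_zero]
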